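/- arXiv:1611.02235 — 2 statements merged into one kernel-verified Lean document; each statement's English description precedes it below -/
import Mathlib

section
/- Let r ≥ 0 and λ_0,…,λ_r ∈ 𝔊. Suppose that for every f : ℤ → ℝ the function R(f)(i,j) = Σ_{k=0}^r λ_k(i,j)·f(i+k) satisfies L(R(f)) = 0. Then, with B_0 = T_j − T_i^{-1}(a)·: B_0(λ_r) = 0; T_i(B_0(λ_{k-1} − λ_k)) + L(λ_k) = 0 for every 1 ≤ k ≤ r; and T_i(B_0(λ_0)) − L(λ_0) = 0. In particular, T_j(λ_r) = T_i^{-1}(a)·λ_r, so that if λ_r and a are nowhere zero then T_i(1/λ_r) satisfies T_j(T_i(1/λ_r)) = (1/a)·T_i(1/λ_r), i.e. T_i(1/λ_r) ∈ ker(T_j − (1/a)·). -/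
/-!
Discrete (quad-graph) setting: the space `𝔊` is modelled by `QG = ℤ → ℤ → ℝ`
(functions `φ(i,j)`), with the shifts `Ti`, `Tj`, their inverses, and the
`k`-fold shifts `TiZ k`, `TjZ k`.  For `g : QG`, pointwise multiplication
`g * φ` models the operator `g·`.
-/

/-- The function space `𝔊` of functions `ℤ² → ℝ`. -/
abbrev QG : Type := ℤ → ℤ → ℝ

namespace QG

noncomputable section

/-- The shift operator `T_i(φ)(i,j) = φ(i+1,j)`. -/
def Ti (φ : QG) : QG := fun i j => φ (i + 1) j

/-- The shift operator `T_j(φ)(i,j) = φ(i,j+1)`. -/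
def Tj (φ : QG) : QG := fun i j => φ i (j + 1)

/-- The `k`-fold shift in `i`. -/
def TiZ (k : ℤ) (φ : QG) : QG := fun i j => φ (i + k) j

/-- The `k`-fold shift in `j`. -/
def TjZ (k : ℤ) (φ : QG) : QG := fun i j => φ i (j + k)

/-- The inverse shift `T_i⁻¹`. -/
def TiInv (φ : QG) : QG := fun i j => φ (i - 1) j

/-- The inverse shift `T_j⁻¹`. -/
def TjInv (φ : QG) : QG := fun i j => φ i (j - 1)

/-- A function that is nowhere zero. -/
def NowhereZero (φ : QG) : Prop := ∀ i j, φ i j ≠ 0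

/-- The linearization operator `L = T_i∘T_j − a·T_i − b·T_j − c·`. -/
def L (a b c : QG) (φ : QG) : QG := Ti (Tj φ) - a * Ti φ - b * Tj φ - c * φ

/-- The pair `(b_k, H_k)` of the Laplace j-transformations:
`b_0 = a`, `H_0 = c + b·T_i⁻¹(a)`,
`b_{k+1} = T_i⁻¹(b_k)·T_j(H_k)/H_k`,
`H_{k+1} = T_j(H_k) − T_j^k(b)·b_{k+1} + T_j^{k+1}(b)·T_i⁻¹(b_{k+1})`. -/
def bH (a b c : QG) : ℕ → QG × QG
  | 0 => (a, c + b * TiInv a)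
  | k + 1 =>
      let bk := TiInv (bH a b c k).1 * Tj (bH a b c k).2 / (bH a b c k).2
      (bk, Tj (bH a b c k).2 - TjZ (k : ℤ) b * bk + TjZ ((k : ℤ) + 1) b * TiInv bk)

/-- The function `b_k`. -/
def bj (a b c : QG) (k : ℕ) : QG := (bH a b c k).1

/-- The Laplace j-invariant `H_k`. -/
def Hj (a b c : QG) (k : ℕ) : QG := (bH a b c k).2

/-- The operator `L_k`: `L_0 = L` and
`L_k = (T_i − T_j^k(b)·)∘(T_j − T_i⁻¹(b_k)·) − H_k·` for `k ≥ 1`. -/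
def Lk (a b c : QG) : ℕ → QG → QG
  | 0, φ => L a b c φ
  | k + 1, φ =>
      Ti (Tj φ - TiInv (bj a b c (k + 1)) * φ)
        - TjZ ((k : ℤ) + 1) b * (Tj φ - TiInv (bj a b c (k + 1)) * φ)
        - Hj a b c (k + 1) * φ

/-- `Bo (k+1)` is the operator `B_k = (T_j − T_i⁻¹(b_k)·)∘B_{k-1}`; `Bo 0 = id` is `B_{-1}`. -/
def Bo (a b c : QG) : ℕ → QG → QG
  | 0, φ => φ
  | k + 1, φ => Tj (Bo a b c k φ) - TiInv (bj a b c k) * Bo a b c k φ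

/-- `Bbar k` is the operator `B̄_k`: `B̄_0 = id`, `B̄_k = (T_j − b_k·)∘B̄_{k-1}`. -/
def Bbar (a b c : QG) : ℕ → QG → QG
  | 0, φ => φ
  | k + 1, φ => Tj (Bbar a b c k φ) - bj a b c (k + 1) * Bbar a b c k φ

/-- `Rchain p` is the composition
`((1/H_0)·)∘(T_i − b·)∘((1/H_1)·)∘(T_i − T_j(b)·)∘···∘((1/H_{p-1})·)∘(T_i − T_j^{p-1}(b)·)`
(the identity for `p = 0`). -/
def Rchain (a b c : QG) : ℕ → QG → QG
  | 0, φ => φ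
  | k + 1, φ => Rchain a b c k ((1 / Hj a b c k) * (Ti φ - TjZ (k : ℤ) b * φ))

end

/-- Auxiliary: the value of `R(f)` for an indicator function `f`. -/
def Ssum (r : ℕ) (lam : ℕ → QG) (i' j' t : ℤ) : ℝ :=
  ∑ k ∈ Finset.range (r + 1), lam k i' j' * (if i' + (k : ℤ) = t then (1:ℝ) else 0)

lemma Ssum_eq (r : ℕ) (lam : ℕ → QG) (i' j' t : ℤ) (m : ℕ) (hm : m ≤ r)
    (ht : i' + (m : ℤ) = t) : Ssum r lam i' j' t = lam m i' j' := by
  unfold Ssum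
  subst ht
  rw [Finset.sum_eq_single m]
  · simp
  · intro k hk hne
    rw [if_neg (by omega), mul_zero]
  · intro h
    exact absurd (Finset.mem_range.mpr (by omega)) h

lemma Ssum_ne (r : ℕ) (lam : ℕ → QG) (i' j' t : ℤ)
    (h : ∀ m : ℕ, m ≤ r → i' + (m : ℤ) ≠ t) : Ssum r lam i' j' t = 0 := by
  unfold Ssum
  apply Finset.sum_eq_zero
  intro k hk
  rw [if_neg (h k (Nat.lt_succ_iff.mp (Finset.mem_range.mp hk))), mul_zero]

/-- Let `r ≥ 0` and `λ_0, …, λ_r ∈ 𝔊` be such that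
`R(f)(i,j) = Σ_{k=0}^r λ_k(i,j)·f(i+k)` satisfies `L(R(f)) = 0` for every `f : ℤ → ℝ`.
Then, with `B_0 = T_j − T_i⁻¹(a)·`: `B_0(λ_r) = 0`;
`T_i(B_0(λ_{k-1} − λ_k)) + L(λ_k) = 0` for every `1 ≤ k ≤ r`; and
`T_i(B_0(λ_0)) − L(λ_0) = 0`.  In particular `T_j(λ_r) = T_i⁻¹(a)·λ_r`, so that if
`λ_r` and `a` are nowhere zero then `T_i(1/λ_r) ∈ ker (T_j − (1/a)·)`. -/
theorem statement18 (a b c : QG) (r : ℕ) (lam : ℕ → QG)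
    (hR : ∀ f : ℤ → ℝ,
      L a b c (fun i j => ∑ k ∈ Finset.range (r + 1), lam k i j * f (i + k)) = 0) :
    (Tj (lam r) - TiInv a * lam r = 0) ∧
    (∀ k, 1 ≤ k → k ≤ r →
      Ti (Tj (lam (k - 1) - lam k) - TiInv a * (lam (k - 1) - lam k))
        + L a b c (lam k) = 0) ∧
    (Ti (Tj (lam 0) - TiInv a * lam 0) - L a b c (lam 0) = 0) ∧
    (Tj (lam r) = TiInv a * lam r) ∧
    (NowhereZero (lam r) → NowhereZero a →
      Tj (Ti (lam r)⁻¹) = a⁻¹ * Ti (lam r)⁻¹) := by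
  have key : ∀ i j t : ℤ,
      Ssum r lam (i+1) (j+1) t - a i j * Ssum r lam (i+1) j t
        - b i j * Ssum r lam i (j+1) t - c i j * Ssum r lam i j t = 0 := by
    intro i j t
    have h := congrFun (congrFun (hR (fun n => if n = t then 1 else 0)) i) j
    simpa only [L, Ti, Tj, Ssum, Pi.sub_apply, Pi.mul_apply, Pi.zero_apply] using h
  have claim1 : Tj (lam r) - TiInv a * lam r = 0 := by
    funext i j
    have h := key (i - 1) j (i + (r : ℤ))
    have e : i - 1 + 1 = i := by ring
    rw [e] at h
    rw [Ssum_eq r lam i (j+1) (i + (r:ℤ)) r le_rfl rfl,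
        Ssum_eq r lam i j (i + (r:ℤ)) r le_rfl rfl,
        Ssum_ne r lam (i-1) (j+1) (i + (r:ℤ)) (by intro m hm; omega),
        Ssum_ne r lam (i-1) j (i + (r:ℤ)) (by intro m hm; omega)] at h
    simp only [Pi.sub_apply, Pi.mul_apply, Pi.zero_apply, Tj, TiInv]
    linarith
  have claim2 : ∀ k, 1 ≤ k → k ≤ r →
      Ti (Tj (lam (k - 1) - lam k) - TiInv a * (lam (k - 1) - lam k))
        + L a b c (lam k) = 0 := by
    intro k hk1 hkr
    funext i j
    have h := key i j (i + (k : ℤ))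
    rw [Ssum_eq r lam (i+1) (j+1) (i + (k:ℤ)) (k-1) (by omega) (by omega),
        Ssum_eq r lam (i+1) j (i + (k:ℤ)) (k-1) (by omega) (by omega),
        Ssum_eq r lam i (j+1) (i + (k:ℤ)) k hkr rfl,
        Ssum_eq r lam i j (i + (k:ℤ)) k hkr rfl] at h
    simp only [Pi.add_apply, Pi.sub_apply, Pi.mul_apply, Pi.zero_apply, Ti, Tj, TiInv, L,
      add_sub_cancel_right]
    linear_combination h
  have claim3 : Ti (Tj (lam 0) - TiInv a * lam 0) - L a b c (lam 0) = 0 := by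
    funext i j
    have h := key i j i
    rw [Ssum_eq r lam i (j+1) i 0 (Nat.zero_le r) (by simp),
        Ssum_eq r lam i j i 0 (Nat.zero_le r) (by simp),
        Ssum_ne r lam (i+1) (j+1) i (by intro m hm; omega),
        Ssum_ne r lam (i+1) j i (by intro m hm; omega)] at h
    simp only [Pi.sub_apply, Pi.mul_apply, Pi.zero_apply, Ti, Tj, TiInv, L,
      add_sub_cancel_right]
    linear_combination -h
  have claim4 : Tj (lam r) = TiInv a * lam r := sub_eq_zero.mp claim1
  refine ⟨claim1, claim2, claim3, claim4, ?_⟩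
  intro _ _
  funext i j
  have h4 : lam r (i+1) (j+1) = a i j * lam r (i+1) j := by
    have := congrFun (congrFun claim4 (i+1)) j
    simpa only [Tj, TiInv, Pi.mul_apply, add_sub_cancel_right] using this
  simp only [Tj, Ti, Pi.mul_apply, Pi.inv_apply, h4, mul_inv]

end QG
end

section
/- Let r ≥ 0 and λ_0,…,λ_r ∈ 𝔊. Suppose that for every f : ℤ → ℝ the function R(f)(i,j) = Σ_{k=0}^r λ_k(i,j)·f(i+k) satisfies L(R(f)) = 0. If the Laplace j-invariants H_0,…,H_r are all nowhere zero, then λ_r vanishes identically. (Equivalently: if R = Σ λ_k·T_i^k is an i-symmetry driver, i.e. λ_r is not identically zero, then some H_p with p ≤ r fails to be nowhere-vanishing.) -/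
namespace QG

/-!
Induction on `r`. Comparing the coefficients of `f(i+r)` and of `f(i)` in `L(R f) = 0` gives
`T_j λ_r = T_i⁻¹(a) λ_r` and `b T_j λ_0 + c λ_0 = 0`; for `r = 0` these combine to `H_0 λ_0 = 0`.
In the inductive step the first relation says that `T_j - T_i⁻¹(a)·` kills the top coefficient,
so the Laplace transform `(T_j - T_i⁻¹(a)·)(R f)` is of the same form with one coefficient fewer,
and it solves an equation whose invariants are `H_1, H_2, …`. The induction hypothesis gives
`(T_j - T_i⁻¹(a)·) λ_r = 0`, which turns the coefficient of `f(i+r+1)` into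
`b T_j λ_{r+1} + c λ_{r+1} = 0`, and again `H_0 λ_{r+1} = 0`.
-/

open Finset

section LaplaceTransform

variable {a b c : QG}

theorem L_apply (φ : QG) (i j : ℤ) :
    L a b c φ i j = φ (i + 1) (j + 1) - a i j * φ (i + 1) j - b i j * φ i (j + 1) - c i j * φ i j :=
  rfl

theorem Hj_zero_apply (i j : ℤ) : Hj a b c 0 i j = c i j + b i j * a (i - 1) j := rfl

theorem bj_one_mul_Hj_zero (hH : NowhereZero (Hj a b c 0)) :
    bj a b c 1 * Hj a b c 0 = TiInv a * Tj (Hj a b c 0) := by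
  funext i j
  exact div_mul_cancel₀ _ (hH i j)

theorem eq_zero_of_Tj_eq_of_mul_Tj_add_mul_eq_zero (hH : NowhereZero (Hj a b c 0)) {φ : QG}
    (hTj : Tj φ = TiInv a * φ) (hbc : b * Tj φ + c * φ = 0) : φ = 0 := by
  have hHφ : Hj a b c 0 * φ = 0 := by
    rw [← hbc, hTj]
    funext i j
    simp only [Pi.mul_apply, Pi.add_apply, Hj_zero_apply, TiInv]
    ring
  funext i j
  exact (mul_eq_zero.mp (congrFun₂ hHφ i j)).resolve_left (hH i j)

/-- With `ψ = T_j φ - T_i⁻¹(a) φ` one has `L φ = T_i ψ - b ψ - H_0 φ`; eliminating `φ` between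
this and the definition of `ψ` gives the transformed equation. -/
theorem L_laplace_of_L_eq_zero (hH : NowhereZero (Hj a b c 0)) {φ : QG} (hφ : L a b c φ = 0) :
    L (bj a b c 1) (Tj b) (Tj (Hj a b c 0) - b * bj a b c 1) (Tj φ - TiInv a * φ) = 0 := by
  funext i j
  have h₀ := congrFun₂ hφ i j
  have h₁ := congrFun₂ hφ i (j + 1)
  have hb₁ := congrFun₂ (bj_one_mul_Hj_zero hH) i j
  simp only [L_apply, Pi.zero_apply, Pi.mul_apply, Pi.sub_apply, Tj, TiInv, Hj_zero_apply,
    add_sub_cancel_right] at h₀ h₁ hb₁ ⊢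
  linear_combination h₁ - bj a b c 1 i j * h₀ - φ i j * hb₁

theorem bH_succ (k : ℕ) :
    bH a b c (k + 1) =
      (TiInv (bH a b c k).1 * Tj (bH a b c k).2 / (bH a b c k).2,
        Tj (bH a b c k).2 - TjZ k b * (TiInv (bH a b c k).1 * Tj (bH a b c k).2 / (bH a b c k).2)
          + TjZ (k + 1) b * TiInv (TiInv (bH a b c k).1 * Tj (bH a b c k).2 / (bH a b c k).2)) :=
  rfl

theorem TjZ_Tj (k : ℤ) (φ : QG) : TjZ k (Tj φ) = TjZ (k + 1) φ := by
  funext i j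
  simp only [TjZ, Tj, add_assoc]

theorem bH_laplace (k : ℕ) :
    bH (bj a b c 1) (Tj b) (Tj (Hj a b c 0) - b * bj a b c 1) k = bH a b c (k + 1) := by
  induction k with
  | zero =>
    have hb : TjZ (0 : ℕ) b = b := by funext i j; simp [TjZ]
    have hTjb : TjZ ((0 : ℕ) + 1) b = Tj b := by funext i j; simp [TjZ, Tj]
    rw [bH_succ, hb, hTjb]
    rfl
  | succ k ih =>
    rw [bH_succ (a := bj a b c 1), ih, bH_succ (k := k + 1), TjZ_Tj, TjZ_Tj]
    push_cast
    ring_nf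

theorem Hj_laplace (k : ℕ) :
    Hj (bj a b c 1) (Tj b) (Tj (Hj a b c 0) - b * bj a b c 1) k = Hj a b c (k + 1) := by
  rw [Hj, bH_laplace, Hj]

end LaplaceTransform

/-- The operator `R = Σ_{k<n} λ_k·T_i^k` applied to `f : ℤ → ℝ`. -/
def shiftSum (lam : ℕ → QG) (n : ℕ) (f : ℤ → ℝ) : QG :=
  fun i j => ∑ k ∈ range n, lam k i j * f (i + k)

theorem shiftSum_succ_of_eq_zero {lam : ℕ → QG} {n : ℕ} (hn : lam n = 0) (f : ℤ → ℝ) :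
    shiftSum lam (n + 1) f = shiftSum lam n f := by
  funext i j
  simp [shiftSum, sum_range_succ, hn]

theorem Tj_shiftSum_sub (a : QG) (lam : ℕ → QG) (n : ℕ) (f : ℤ → ℝ) :
    Tj (shiftSum lam n f) - TiInv a * shiftSum lam n f
      = shiftSum (fun k => Tj (lam k) - TiInv a * lam k) n f := by
  funext i j
  simp only [shiftSum, Tj, TiInv, Pi.sub_apply, Pi.mul_apply, mul_sum, ← sum_sub_distrib]
  exact sum_congr rfl fun k _ => by ring

theorem sum_range_mul_ite_of_lt (g : ℕ → ℝ) {n m : ℕ} {x t : ℤ} (hm : m < n) (ht : x + m = t) :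
    ∑ k ∈ range n, g k * (if x + k = t then 1 else 0) = g m := by
  subst ht
  simp [hm]

theorem sum_range_mul_ite_of_ne (g : ℕ → ℝ) {n : ℕ} {x t : ℤ} (ht : ∀ k < n, x + k ≠ t) :
    ∑ k ∈ range n, g k * (if x + k = t then 1 else 0) = 0 :=
  sum_eq_zero fun k hk => by rw [if_neg (ht k (mem_range.mp hk)), mul_zero]

section Coefficients

variable {a b c : QG} {lam : ℕ → QG}

theorem Tj_top_eq_of_L_shiftSum (r : ℕ) (hR : ∀ f, L a b c (shiftSum lam (r + 1) f) = 0) :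
    Tj (lam r) = TiInv a * lam r := by
  funext i j
  have h := congrFun₂ (hR fun x => if x = i + r then 1 else 0) (i - 1) j
  simp only [L_apply, shiftSum, Pi.zero_apply, sub_add_cancel] at h
  rw [sum_range_mul_ite_of_lt _ (Nat.lt_succ_self r) rfl,
    sum_range_mul_ite_of_lt _ (Nat.lt_succ_self r) rfl,
    sum_range_mul_ite_of_ne _ (by omega), sum_range_mul_ite_of_ne _ (by omega)] at h
  simp only [Tj, TiInv, Pi.mul_apply]
  linarith

theorem mul_Tj_bot_add_mul_eq_zero_of_L_shiftSum (n : ℕ)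
    (hR : ∀ f, L a b c (shiftSum lam (n + 1) f) = 0) :
    b * Tj (lam 0) + c * lam 0 = 0 := by
  funext i j
  have h := congrFun₂ (hR fun x => if x = i then 1 else 0) i j
  simp only [L_apply, shiftSum, Pi.zero_apply] at h
  rw [sum_range_mul_ite_of_ne _ (by omega), sum_range_mul_ite_of_ne _ (by omega),
    sum_range_mul_ite_of_lt _ n.succ_pos (by simp),
    sum_range_mul_ite_of_lt _ n.succ_pos (by simp)] at h
  simp only [Tj, Pi.mul_apply, Pi.add_apply, Pi.zero_apply]
  linarith

theorem Ti_Tj_sub_eq_of_L_shiftSum (r : ℕ) (hR : ∀ f, L a b c (shiftSum lam (r + 2) f) = 0) :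
    Ti (Tj (lam r) - TiInv a * lam r) = b * Tj (lam (r + 1)) + c * lam (r + 1) := by
  funext i j
  have h := congrFun₂ (hR fun x => if x = i + 1 + r then 1 else 0) i j
  simp only [L_apply, shiftSum, Pi.zero_apply] at h
  rw [sum_range_mul_ite_of_lt _ (by omega : r < r + 2) rfl,
    sum_range_mul_ite_of_lt _ (by omega : r < r + 2) rfl,
    sum_range_mul_ite_of_lt _ (by omega : r + 1 < r + 2) (by push_cast; ring),
    sum_range_mul_ite_of_lt _ (by omega : r + 1 < r + 2) (by push_cast; ring)] at h
  simp only [Ti, Tj, TiInv, Pi.mul_apply, Pi.add_apply, Pi.sub_apply, add_sub_cancel_right]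
  linarith

end Coefficients

theorem top_eq_zero_of_L_shiftSum (r : ℕ) :
    ∀ {a b c : QG} {lam : ℕ → QG}, (∀ f, L a b c (shiftSum lam (r + 1) f) = 0) →
      (∀ m ≤ r, NowhereZero (Hj a b c m)) → lam r = 0 := by
  induction r with
  | zero =>
    intro a b c lam hR hH
    exact eq_zero_of_Tj_eq_of_mul_Tj_add_mul_eq_zero (hH 0 le_rfl) (Tj_top_eq_of_L_shiftSum 0 hR)
      (mul_Tj_bot_add_mul_eq_zero_of_L_shiftSum 0 hR)
  | succ r ih =>
    intro a b c lam hR hH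
    have hH₀ := hH 0 r.succ.zero_le
    have htop := Tj_top_eq_of_L_shiftSum (r + 1) hR
    have hR' : ∀ f, L (bj a b c 1) (Tj b) (Tj (Hj a b c 0) - b * bj a b c 1)
        (shiftSum (fun k => Tj (lam k) - TiInv a * lam k) (r + 1) f) = 0 := fun f => by
      rw [← shiftSum_succ_of_eq_zero (sub_eq_zero.mpr htop), ← Tj_shiftSum_sub]
      exact L_laplace_of_L_eq_zero hH₀ (hR f)
    have hr : Tj (lam r) - TiInv a * lam r = 0 :=
      ih hR' fun m hm => Hj_laplace m ▸ hH (m + 1) (by omega)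
    refine eq_zero_of_Tj_eq_of_mul_Tj_add_mul_eq_zero hH₀ htop ?_
    rw [← Ti_Tj_sub_eq_of_L_shiftSum r hR, hr]
    rfl

/-- Let `r ≥ 0` and `λ_0, …, λ_r ∈ 𝔊` be such that
`R(f)(i,j) = Σ_{k=0}^r λ_k(i,j)·f(i+k)` satisfies `L(R(f)) = 0` for every `f : ℤ → ℝ`.
If the Laplace j-invariants `H_0, …, H_r` are all nowhere zero, then `λ_r` vanishes
identically. -/
theorem statement19 (a b c : QG) (r : ℕ) (lam : ℕ → QG)
    (hR : ∀ f : ℤ → ℝ,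
      L a b c (fun i j => ∑ k ∈ Finset.range (r + 1), lam k i j * f (i + k)) = 0)
    (hH : ∀ m, m ≤ r → NowhereZero (Hj a b c m)) :
    lam r = 0 :=
  top_eq_zero_of_L_shiftSum r hR hH

end QG
end
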